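/- For every trimming level α ∈ (0,1), the α-trimmed Bayes error vanishes if and only if the Bayes error is at most the trimming level: Err_α(P) = 0 ⟺ Err(P) ≤ α. -/

import Mathlib

/-! A trimmed version `Q` of `P` has density at most `1/(1-α)`, so `Q(E) ≤ P(E)/(1-α)` for
every event; applied to the complement of the error set of a classifier `g` this gives
`P(g ≠ y) ≤ α + (1-α) Q(g ≠ y)`. Conversely, giving the correctly classified set the density
`1/(1-α)` (or less, if its mass would exceed one) and the error set a smaller constant density
attains `Q(g ≠ y) = max 0 ((P(g ≠ y) - α)/(1-α))`. Hence
`Err_α(P) = max 0 ((Err(P) - α)/(1-α))`, which vanishes exactly when `Err(P) ≤ α`. -/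

open MeasureTheory

noncomputable section

/-- The classification error `R(g) = P({(y,x) : g(x) ≠ y})`. -/
def classErr {p : ℕ} (P : Measure (Bool × (Fin p → ℝ))) (g : (Fin p → ℝ) → Bool) : ℝ :=
  (P {z | g z.2 ≠ z.1}).toReal

/-- The set of `α`-trimmed versions of a measure `μ`. -/
def trimmedSet {Ω : Type*} [MeasurableSpace Ω] (μ : Measure Ω) (α : ℝ) :
    Set (Measure Ω) :=
  {ν | IsProbabilityMeasure ν ∧ ν ≪ μ ∧
    ∀ᵐ z ∂μ, ν.rnDeriv μ z ≤ ENNReal.ofReal (1 / (1 - α))}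

/-- The Bayes error `Err(Q) = inf_g Q(g(x) ≠ y)`, infimum over measurable classifiers. -/
def bayesErr {p : ℕ} (Q : Measure (Bool × (Fin p → ℝ))) : ℝ :=
  sInf ((fun g => classErr Q g) '' {g : (Fin p → ℝ) → Bool | Measurable g})

/-- The `α`-trimmed Bayes error `Err_α(P) = inf_{Q ∈ 𝓡_α(P)} Err(Q)`. -/
def trimmedBayesErr {p : ℕ} (P : Measure (Bool × (Fin p → ℝ))) (α : ℝ) : ℝ :=
  sInf (bayesErr '' trimmedSet P α)

section Trimming

variable {Ω : Type*} [MeasurableSpace Ω] {μ ν : Measure Ω} {α : ℝ} {s : Set Ω}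

lemma self_mem_trimmedSet [IsProbabilityMeasure μ] (hα₀ : 0 ≤ α) (hα₁ : α < 1) :
    μ ∈ trimmedSet μ α := by
  refine ⟨inferInstance, Measure.AbsolutelyContinuous.rfl, ?_⟩
  filter_upwards [Measure.rnDeriv_self μ] with z hz
  rw [hz, ← ENNReal.ofReal_one]
  exact ENNReal.ofReal_le_ofReal (one_le_one_div (by linarith) (by linarith))

lemma withDensity_mem_trimmedSet [SigmaFinite μ] {f : Ω → ENNReal} (hf : Measurable f)
    (hf_le : ∀ z, f z ≤ ENNReal.ofReal (1 / (1 - α))) (hf_mass : ∫⁻ z, f z ∂μ = 1) :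
    μ.withDensity f ∈ trimmedSet μ α :=
  ⟨⟨by rw [withDensity_apply _ MeasurableSet.univ, Measure.restrict_univ, hf_mass]⟩,
    withDensity_absolutelyContinuous μ f,
    (Measure.rnDeriv_withDensity μ hf).mono fun z hz => hz ▸ hf_le z⟩

lemma apply_le_of_mem_trimmedSet [SigmaFinite μ] (hν : ν ∈ trimmedSet μ α) (s : Set Ω) :
    ν s ≤ ENNReal.ofReal (1 / (1 - α)) * μ s := by
  obtain ⟨hν_prob, hνμ, hν_le⟩ := hν
  have := Measure.haveLebesgueDecomposition_of_sigmaFinite ν μ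
  calc ν s = ∫⁻ z in s, ν.rnDeriv μ z ∂μ := (Measure.setLIntegral_rnDeriv hνμ s).symm
    _ ≤ ∫⁻ _ in s, ENNReal.ofReal (1 / (1 - α)) ∂μ :=
        lintegral_mono_ae (ae_restrict_of_ae hν_le)
    _ = ENNReal.ofReal (1 / (1 - α)) * μ s := setLIntegral_const _ _

lemma mul_measureReal_le_of_mem_trimmedSet [IsFiniteMeasure μ] (hα : α < 1)
    (hν : ν ∈ trimmedSet μ α) (s : Set Ω) : (1 - α) * ν.real s ≤ μ.real s := by
  have h1α : 0 < 1 - α := by linarith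
  have hνs := ENNReal.toReal_mono (by finiteness) (apply_le_of_mem_trimmedSet hν s)
  rw [ENNReal.toReal_mul, ENNReal.toReal_ofReal (by positivity)] at hνs
  rw [← le_div_iff₀' h1α, div_eq_inv_mul, ← one_div]
  exact hνs

lemma measureReal_le_add_of_mem_trimmedSet [IsProbabilityMeasure μ] (hα : α < 1)
    (hν : ν ∈ trimmedSet μ α) (hs : MeasurableSet s) :
    μ.real s ≤ α + (1 - α) * ν.real s := by
  have := hν.1
  have hsc := mul_measureReal_le_of_mem_trimmedSet hα hν sᶜ
  rw [probReal_compl_eq_one_sub hs, probReal_compl_eq_one_sub hs] at hsc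
  linarith

lemma ofReal_div_measureReal_mul [IsFiniteMeasure μ] {r : ℝ} (hr : μ.real s = 0 → r = 0) :
    ENNReal.ofReal (r / μ.real s) * μ s = ENNReal.ofReal r := by
  by_cases hs : μ.real s = 0
  · simp [hr hs]
  · rw [← ofReal_measureReal (μ := μ) (s := s), ← ENNReal.ofReal_mul' measureReal_nonneg,
      div_mul_cancel₀ _ hs]

lemma exists_mem_trimmedSet_measureReal_eq [IsProbabilityMeasure μ] (hα : α < 1)
    (hs : MeasurableSet s) {t : ℝ} (ht₀ : 0 ≤ t) (ht₁ : t ≤ 1)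
    (hts : (1 - α) * t ≤ μ.real s) (hts' : (1 - α) * (1 - t) ≤ μ.real sᶜ) :
    ∃ ν ∈ trimmedSet μ α, ν.real s = t := by
  have h1α : 0 < 1 - α := by linarith
  classical
  set f : Ω → ENNReal :=
    s.piecewise (fun _ => ENNReal.ofReal (t / μ.real s))
      (fun _ => ENNReal.ofReal ((1 - t) / μ.real sᶜ))
  have hzero {u : Set Ω} {r : ℝ} (hr : 0 ≤ r) (hru : (1 - α) * r ≤ μ.real u) :
      μ.real u = 0 → r = 0 := fun hu => by nlinarith
  have hle {u : Set Ω} {r : ℝ} (hru : (1 - α) * r ≤ μ.real u) :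
      ENNReal.ofReal (r / μ.real u) ≤ ENNReal.ofReal (1 / (1 - α)) :=
    ENNReal.ofReal_le_ofReal <| div_le_of_le_mul₀ measureReal_nonneg (by positivity) <| by
      rwa [one_div, ← div_eq_inv_mul, le_div_iff₀' h1α]
  have hf_s : ∫⁻ z in s, f z ∂μ = ENNReal.ofReal t := by
    rw [setLIntegral_congr_fun hs (Set.piecewise_eqOn _ _ _), setLIntegral_const,
      ofReal_div_measureReal_mul (hzero ht₀ hts)]
  refine ⟨μ.withDensity f, withDensity_mem_trimmedSet ?_ ?_ ?_, ?_⟩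
  · exact Measurable.piecewise hs measurable_const measurable_const
  · intro z
    by_cases hz : z ∈ s
    · simpa [f, hz] using hle hts
    · simpa [f, hz] using hle hts'
  · rw [lintegral_piecewise hs, setLIntegral_const, setLIntegral_const,
      ofReal_div_measureReal_mul (hzero ht₀ hts),
      ofReal_div_measureReal_mul (hzero (by linarith) hts'),
      ← ENNReal.ofReal_add ht₀ (by linarith)]
    simp
  · rw [measureReal_def, withDensity_apply _ hs, hf_s, ENNReal.toReal_ofReal ht₀]

end Trimming

section Bayes

variable {p : ℕ} {P Q : Measure (Bool × (Fin p → ℝ))} {g : (Fin p → ℝ) → Bool}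
  {α : ℝ}

lemma measurableSet_misclassified (hg : Measurable g) :
    MeasurableSet {z : Bool × (Fin p → ℝ) | g z.2 ≠ z.1} :=
  (measurableSet_eq_fun (hg.comp measurable_snd) measurable_fst).compl

lemma classErr_eq_measureReal : classErr Q g = Q.real {z | g z.2 ≠ z.1} := rfl

lemma bayesErr_le_classErr (hg : Measurable g) : bayesErr Q ≤ classErr Q g :=
  csInf_le ⟨0, by rintro x ⟨g, -, rfl⟩; exact ENNReal.toReal_nonneg⟩ ⟨g, hg, rfl⟩

lemma le_bayesErr {a : ℝ} (h : ∀ g, Measurable g → a ≤ classErr Q g) : a ≤ bayesErr Q :=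
  le_csInf ⟨_, Set.mem_image_of_mem _ (measurable_const (a := true))⟩
    (Set.forall_mem_image.2 h)

lemma exists_classErr_lt {b : ℝ} (h : bayesErr Q < b) :
    ∃ g, Measurable g ∧ classErr Q g < b := by
  obtain ⟨_, ⟨g, hg, rfl⟩, hgb⟩ :=
    exists_lt_of_csInf_lt ⟨_, Set.mem_image_of_mem _ (measurable_const (a := true))⟩ h
  exact ⟨g, hg, hgb⟩

lemma bayesErr_nonneg : 0 ≤ bayesErr Q :=
  le_bayesErr fun _ _ => ENNReal.toReal_nonneg

lemma trimmedBayesErr_le_bayesErr (hQ : Q ∈ trimmedSet P α) :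
    trimmedBayesErr P α ≤ bayesErr Q :=
  csInf_le ⟨0, by rintro x ⟨Q, -, rfl⟩; exact bayesErr_nonneg⟩ ⟨Q, hQ, rfl⟩

lemma trimmedBayesErr_nonneg : 0 ≤ trimmedBayesErr P α :=
  Real.sInf_nonneg (by rintro x ⟨Q, -, rfl⟩; exact bayesErr_nonneg)

lemma bayesErr_sub_div_le_bayesErr_of_mem_trimmedSet [IsProbabilityMeasure P] (hα : α < 1)
    (hQ : Q ∈ trimmedSet P α) : (bayesErr P - α) / (1 - α) ≤ bayesErr Q :=
  le_bayesErr fun g hg => by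
    have hPg := bayesErr_le_classErr (Q := P) hg
    rw [classErr_eq_measureReal] at hPg
    rw [div_le_iff₀' (by linarith), classErr_eq_measureReal]
    linarith [measureReal_le_add_of_mem_trimmedSet hα hQ (measurableSet_misclassified hg)]

lemma bayesErr_sub_div_le_trimmedBayesErr [IsProbabilityMeasure P] (hα : α ∈ Set.Ioo 0 1) :
    (bayesErr P - α) / (1 - α) ≤ trimmedBayesErr P α :=
  le_csInf ⟨_, Set.mem_image_of_mem _ (self_mem_trimmedSet hα.1.le hα.2)⟩
    (Set.forall_mem_image.2 fun _ => bayesErr_sub_div_le_bayesErr_of_mem_trimmedSet hα.2)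

lemma trimmedBayesErr_le_max_classErr [IsProbabilityMeasure P] (hα : α ∈ Set.Ioo 0 1)
    (hg : Measurable g) : trimmedBayesErr P α ≤ max 0 ((classErr P g - α) / (1 - α)) := by
  obtain ⟨hα₀, hα₁⟩ := hα
  have h1α : 0 < 1 - α := by linarith
  set s := {z : Bool × (Fin p → ℝ) | g z.2 ≠ z.1}
  have hs := measurableSet_misclassified hg
  have hPs : classErr P g = P.real s := classErr_eq_measureReal
  have hPsc : P.real sᶜ = 1 - classErr P g := probReal_compl_eq_one_sub hs
  have hPs_le : classErr P g ≤ 1 := measureReal_le_one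
  set t := max 0 ((classErr P g - α) / (1 - α))
  have hts : (1 - α) * t ≤ P.real s ∧ (1 - α) * (1 - t) ≤ P.real sᶜ := by
    rcases le_total (classErr P g) α with hgα | hαg
    · have ht : t = 0 := max_eq_left (div_nonpos_of_nonpos_of_nonneg (by linarith) h1α.le)
      rw [ht]
      constructor <;> nlinarith [measureReal_nonneg (μ := P) (s := s)]
    · have ht : t = (classErr P g - α) / (1 - α) :=
        max_eq_right (div_nonneg (by linarith) h1α.le)
      rw [ht, mul_one_sub, mul_div_cancel₀ _ h1α.ne']
      constructor <;> linarith
  obtain ⟨Q, hQ, hQs⟩ := exists_mem_trimmedSet_measureReal_eq hα₁ hs (le_max_left _ _)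
    (max_le zero_le_one ((div_le_one h1α).2 (by linarith))) hts.1 hts.2
  calc trimmedBayesErr P α ≤ bayesErr Q := trimmedBayesErr_le_bayesErr hQ
    _ ≤ classErr Q g := bayesErr_le_classErr hg
    _ = t := hQs

lemma trimmedBayesErr_le_max_bayesErr [IsProbabilityMeasure P] (hα : α ∈ Set.Ioo 0 1) :
    trimmedBayesErr P α ≤ max 0 ((bayesErr P - α) / (1 - α)) := by
  have h1α : 0 < 1 - α := by linarith [hα.2]
  refine le_of_forall_pos_le_add fun ε hε => ?_
  obtain ⟨g, hg, hgε⟩ :=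
    exists_classErr_lt (lt_add_of_pos_right (bayesErr P) (mul_pos h1α hε))
  have hgε' : (classErr P g - α) / (1 - α) ≤ (bayesErr P - α) / (1 - α) + ε := by
    rw [div_add' _ _ _ h1α.ne', div_le_div_iff_of_pos_right h1α]
    linarith
  calc trimmedBayesErr P α ≤ max 0 ((classErr P g - α) / (1 - α)) :=
        trimmedBayesErr_le_max_classErr hα hg
    _ ≤ max 0 ((bayesErr P - α) / (1 - α)) + ε :=
        max_le (by positivity) (hgε'.trans (by gcongr; exact le_max_right _ _))

theorem trimmedBayesErr_eq_max [IsProbabilityMeasure P] (hα : α ∈ Set.Ioo 0 1) :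
    trimmedBayesErr P α = max 0 ((bayesErr P - α) / (1 - α)) :=
  (trimmedBayesErr_le_max_bayesErr hα).antisymm
    (max_le trimmedBayesErr_nonneg (bayesErr_sub_div_le_trimmedBayesErr hα))

end Bayes

/-- The `α`-trimmed Bayes error vanishes iff the Bayes error is at most `α`. -/
theorem trimmedBayesErr_eq_zero_iff {p : ℕ} (P : Measure (Bool × (Fin p → ℝ)))
    [IsProbabilityMeasure P] {α : ℝ} (hα : α ∈ Set.Ioo (0 : ℝ) 1) :
    trimmedBayesErr P α = 0 ↔ bayesErr P ≤ α := by
  rw [trimmedBayesErr_eq_max hα, max_eq_left_iff, div_le_iff₀ (by linarith [hα.2]), zero_mul,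
    sub_nonpos]

end
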